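/- arXiv:2412.17648 — 3 statements merged into one kernel-verified Lean document; each statement's English description precedes it below -/
import Mathlib

section
/- If a graph G is word-representable, then it is k-word-representable for some k; i.e., there exists a k-uniform word (every letter occurs exactly k times) over the vertex set representing G. -/
section Defs

variable {V : Type*}

/-- Two letters alternate in a word: the subword over `{a,b}` has no equal consecutive letters. -/
def Alternates [DecidableEq V] (w : List V) (a b : V) : Prop :=
  (w.filter (fun x => decide (x = a ∨ x = b))).Chain' (· ≠ ·)

/-- A word over the vertex set represents a graph: every vertex occurs, and two distinct
vertices are adjacent iff they alternate in the word. -/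
def Represents [DecidableEq V] (w : List V) (G : SimpleGraph V) : Prop :=
  (∀ v : V, v ∈ w) ∧ ∀ a b : V, a ≠ b → (G.Adj a b ↔ Alternates w a b)

def WordRepresentable [DecidableEq V] (G : SimpleGraph V) : Prop :=
  ∃ w : List V, Represents w G

/-- Every letter occurs exactly `k` times. -/
def IsKUniform [DecidableEq V] (w : List V) (k : ℕ) : Prop :=
  ∀ v : V, w.count v = k

/-- `k` is the representation number of `G`. -/
def RepNumIs [DecidableEq V] (G : SimpleGraph V) (k : ℕ) : Prop :=
  IsLeast {n : ℕ | ∃ w : List V, IsKUniform w n ∧ Represents w G} k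

/-- `p` is a permutation of the vertex set (as a list). -/
def IsPermOn (p : List V) : Prop := p.Nodup ∧ ∀ v : V, v ∈ p

/-- `G` is representable by a concatenation of `k` permutations of its vertex set. -/
def PermRepresents [DecidableEq V] (G : SimpleGraph V) (k : ℕ) : Prop :=
  ∃ ps : List (List V), ps.length = k ∧ (∀ p ∈ ps, IsPermOn p) ∧ Represents ps.flatten G

/-- `k` is the permutation-representation number of `G`. -/
def PrnIs [DecidableEq V] (G : SimpleGraph V) (k : ℕ) : Prop :=
  IsLeast {n : ℕ | PermRepresents G n} k

/-- A comparability graph: a graph admitting a transitive orientation of its edges. -/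
def IsComparability (G : SimpleGraph V) : Prop :=
  ∃ lt : V → V → Prop, Transitive lt ∧ (∀ a b, lt a b → G.Adj a b) ∧
    (∀ a b, G.Adj a b → (lt a b ↔ ¬ lt b a))

/-- A module: every outside vertex is adjacent to all of `M` or to none of `M`. -/
def IsModule (G : SimpleGraph V) (M : Set V) : Prop :=
  ∀ x ∉ M, (∀ m ∈ M, G.Adj x m) ∨ (∀ m ∈ M, ¬ G.Adj x m)

end Defs

/-- The graph obtained from `G` by replacing the vertex `a` with the module `M`. -/
def substGraph {W V' : Type*} (G : SimpleGraph W) (a : W) (M : SimpleGraph V') :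
    SimpleGraph ({x : W // x ≠ a} ⊕ V') where
  Adj x y :=
    match x, y with
    | Sum.inl u, Sum.inl v => G.Adj u.1 v.1
    | Sum.inl u, Sum.inr _ => G.Adj u.1 a
    | Sum.inr _, Sum.inl v => G.Adj a v.1
    | Sum.inr u, Sum.inr v => M.Adj u v
  symm := by
    constructor
    rintro (u | u) (v | v) h
    · exact h.symm
    · exact h.symm
    · exact h.symm
    · exact h.symm
  loopless := by
    constructor
    rintro (u | u) h
    · exact G.irrefl h
    · exact M.irrefl h

/-- The quotient graph of a modular partition: parts are adjacent iff completely adjacent. -/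
def quotientGraph {V : Type*} (G : SimpleGraph V) {n : ℕ} (Mod : Fin n → Set V) :
    SimpleGraph (Fin n) where
  Adj i j := i ≠ j ∧ ∀ a ∈ Mod i, ∀ b ∈ Mod j, G.Adj a b
  symm := by
    constructor
    rintro i j ⟨hij, h⟩
    exact ⟨hij.symm, fun a ha b hb => (h b hb a ha).symm⟩
  loopless := by constructor; rintro i ⟨h, _⟩; exact h rfl

/-- The lexicographical product of two graphs. -/
def lexProd {V V' : Type*} (G : SimpleGraph V) (G' : SimpleGraph V') :
    SimpleGraph (V × V') where
  Adj x y := G.Adj x.1 y.1 ∨ (x.1 = y.1 ∧ G'.Adj x.2 y.2)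
  symm := by
    constructor
    rintro ⟨a, a'⟩ ⟨b, b'⟩ (h | ⟨h1, h2⟩)
    · exact Or.inl h.symm
    · exact Or.inr ⟨h1.symm, h2.symm⟩
  loopless := by
    constructor
    rintro ⟨a, a'⟩ (h | ⟨_, h⟩)
    · exact G.irrefl h
    · exact G'.irrefl h

/-!
Let `k` be the largest number of occurrences of a letter in a representant `w`. Prepend to `w`
the letters occurring fewer than `k` times, each once, in the order of their first occurrence
in `w`. For a non-alternating pair the old word stays a suffix of the new subword. For an
alternating pair whose subword starts with `a`, the letter `a` occurs at least as often as the
other one `b`, so if `a` is prepended then so is `b`; the prepended part restricted to `{a, b}`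
is `ab`, `b` or empty, and the pair still alternates. After `k` such steps every letter occurs
exactly `k` times.
-/

namespace List

variable {α : Type*} [DecidableEq α]

/-- Unlike `List.dedup`, which keeps the last occurrence of each letter, this keeps the first. -/
def firstOccurrences : List α → List α
  | [] => []
  | x :: t => x :: (firstOccurrences t).filter (· ≠ x)

@[simp]
theorem mem_firstOccurrences {l : List α} {v : α} : v ∈ l.firstOccurrences ↔ v ∈ l := by
  induction l with
  | nil => simp [firstOccurrences]
  | cons x t ih => by_cases hv : v = x <;> simp [firstOccurrences, ih, hv]

theorem nodup_firstOccurrences (l : List α) : l.firstOccurrences.Nodup := by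
  induction l with
  | nil => simp [firstOccurrences]
  | cons x t ih => exact nodup_cons.2 ⟨by simp, ih.filter _⟩

theorem count_firstOccurrences {l : List α} {v : α} (hv : v ∈ l) :
    l.firstOccurrences.count v = 1 :=
  count_eq_one_of_mem (nodup_firstOccurrences l) (mem_firstOccurrences.2 hv)

theorem filter_firstOccurrences (p : α → Bool) (l : List α) :
    l.firstOccurrences.filter p = (l.filter p).firstOccurrences := by
  induction l with
  | nil => rfl
  | cons x t ih =>
    by_cases hx : p x
    · simp [firstOccurrences, hx, filter_comm p, ih]
    · rw [filter_cons_of_neg hx, ← ih, firstOccurrences, filter_cons_of_neg hx, filter_comm,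
        filter_eq_self.2]
      rintro y hy
      have hpy : p y := (mem_filter.1 hy).2
      exact decide_eq_true fun hyx => hx (hyx ▸ hpy)

theorem firstOccurrences_cons_eq_pair {x y : α} {t : List α} (hyx : y ≠ x) (hy : y ∈ t)
    (ht : ∀ z ∈ t, z = x ∨ z = y) : (x :: t).firstOccurrences = [x, y] := by
  rw [firstOccurrences, cons_inj_right, ← perm_singleton,
    perm_ext_iff_of_nodup ((nodup_firstOccurrences t).filter _) (nodup_singleton y)]
  intro z
  simp only [mem_filter, mem_firstOccurrences, mem_singleton, decide_eq_true_eq]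
  constructor
  · rintro ⟨hz, hzx⟩
    exact (ht z hz).resolve_left hzx
  · rintro rfl
    exact ⟨hy, hyx⟩

-- The upper bound carries the induction, which swaps the roles of `x` and `y`.
theorem count_le_count_of_isChain_ne {x y : α} {t : List α} (hyx : y ≠ x)
    (hchain : (x :: t).IsChain (· ≠ ·)) (ht : ∀ z ∈ t, z = x ∨ z = y) :
    (x :: t).count y ≤ (x :: t).count x ∧ (x :: t).count x ≤ (x :: t).count y + 1 := by
  induction t generalizing x y with
  | nil => simp [hyx.symm]
  | cons z t ih =>
    obtain ⟨hxz, hchain⟩ := isChain_cons_cons.1 hchain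
    obtain rfl : z = y := (ht z mem_cons_self).resolve_left hxz.symm
    have := ih hyx.symm hchain fun u hu => (ht u (mem_cons_of_mem _ hu)).symm
    simp only [count_cons_self, count_cons_of_ne hyx, count_cons_of_ne hyx.symm] at this ⊢
    omega

end List

open List

section Padding

variable {V : Type*} [DecidableEq V]

theorem alternates_comm {w : List V} {a b : V} : Alternates w a b ↔ Alternates w b a := by
  simp only [Alternates, or_comm]

def padStep (k : ℕ) (w : List V) : List V :=
  w.firstOccurrences.filter (fun v => w.count v < k) ++ w

theorem mem_padStep {k : ℕ} {w : List V} {v : V} (hv : v ∈ w) : v ∈ padStep k w :=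
  mem_append_right _ hv

theorem count_padStep {k : ℕ} {w : List V} {v : V} (hv : v ∈ w) (hk : w.count v ≤ k) :
    (padStep k w).count v = min (w.count v + 1) k := by
  by_cases hlt : w.count v < k
  · rw [padStep, count_append, count_filter (by simpa using hlt), count_firstOccurrences hv]
    omega
  · rw [padStep, count_append, count_eq_zero.2 (by simp [hlt])]
    omega

theorem count_iterate_padStep {k : ℕ} {w : List V} {v : V} (hv : v ∈ w) (hk : w.count v ≤ k)
    (n : ℕ) : ((padStep k)^[n] w).count v = min (w.count v + n) k := by
  induction n generalizing w with
  | zero => simp [hk]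
  | succ n ih =>
    rw [Function.iterate_succ_apply, ih (mem_padStep hv) (by simp [count_padStep hv hk]),
      count_padStep hv hk]
    omega

theorem alternates_padStep {w : List V} {a b : V} (k : ℕ) (hab : a ≠ b) (ha : a ∈ w)
    (hb : b ∈ w) (h : Alternates w a b) : Alternates (padStep k w) a b := by
  wlog hhead : ∃ t, w.filter (fun x => decide (x = a ∨ x = b)) = a :: t generalizing a b
  · refine alternates_comm.2 (this hab.symm hb ha (alternates_comm.1 h) ?_)
    have haF : a ∈ w.filter (fun x => decide (x = a ∨ x = b)) := mem_filter.2 ⟨ha, by simp⟩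
    obtain ⟨x, t, hF⟩ := exists_cons_of_ne_nil (ne_nil_of_mem haF)
    have hxF : x ∈ w.filter (fun x => decide (x = a ∨ x = b)) := hF ▸ mem_cons_self
    have hx : x = a ∨ x = b := of_decide_eq_true (mem_filter.1 hxF).2
    obtain rfl : x = b := hx.resolve_left fun hxa => hhead ⟨t, hxa ▸ hF⟩
    exact ⟨t, by simpa only [or_comm] using hF⟩
  obtain ⟨t, hFt⟩ := hhead
  have ht : ∀ z ∈ t, z = a ∨ z = b := fun z hz => by
    have hzF : z ∈ w.filter (fun x => decide (x = a ∨ x = b)) := hFt ▸ mem_cons_of_mem a hz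
    exact of_decide_eq_true (mem_filter.1 hzF).2
  have hbt : b ∈ t :=
    (mem_cons.1 (hFt ▸ mem_filter.2 ⟨hb, by simp⟩ : b ∈ a :: t)).resolve_left hab.symm
  have hchain : (a :: t).IsChain (· ≠ ·) := hFt ▸ h
  have hcount_eq (v : V) (hv : v = a ∨ v = b) : w.count v = (a :: t).count v := by
    rw [← hFt, count_filter (by simpa using hv)]
  have hcount : w.count b ≤ w.count a := by
    rw [hcount_eq a (.inl rfl), hcount_eq b (.inr rfl)]
    exact (count_le_count_of_isChain_ne hab.symm hchain ht).1
  have hprefix : (padStep k w).filter (fun x => decide (x = a ∨ x = b))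
      = [a, b].filter (fun v => w.count v < k) ++ a :: t := by
    rw [padStep, filter_append, filter_comm, filter_firstOccurrences, hFt,
      firstOccurrences_cons_eq_pair hab.symm hbt ht]
  change ((padStep k w).filter _).IsChain (· ≠ ·)
  rw [hprefix]
  by_cases hka : w.count a < k <;> by_cases hkb : w.count b < k
  all_goals first | omega | simp [hka, hkb, hab, hab.symm, hchain]

theorem represents_padStep {w : List V} {G : SimpleGraph V} (k : ℕ) (hw : Represents w G) :
    Represents (padStep k w) G := by
  refine ⟨fun v => mem_padStep (hw.1 v), fun a b hab => (hw.2 a b hab).trans ?_⟩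
  refine ⟨alternates_padStep k hab (hw.1 a) (hw.1 b), fun h => ?_⟩
  rw [Alternates, padStep, filter_append] at h
  exact h.right_of_append

end Padding

/-- a word-representable graph is `k`-word-representable for some `k`. -/
theorem stmt0 {V : Type*} [DecidableEq V] [Fintype V] (G : SimpleGraph V)
    (h : WordRepresentable G) :
    ∃ (k : ℕ) (w : List V), IsKUniform w k ∧ Represents w G := by
  obtain ⟨w, hw⟩ := h
  let k := Finset.univ.sup fun v => w.count v
  have hk (v : V) : w.count v ≤ k := Finset.le_sup (f := fun v => w.count v) (Finset.mem_univ v)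
  refine ⟨k, (padStep k)^[k] w, fun v => ?_,
    Function.Iterate.rec _ hw (fun _ => represents_padStep k) k⟩
  rw [count_iterate_padStep (hw.1 v) (hk v)]
  omega
end

section
/- A graph is permutationally representable (representable by a word that is a concatenation of permutations of its vertex set) if and only if it is a comparability graph (admits a transitive orientation). -/
/-!
If a word is a concatenation of permutations of `V`, two distinct letters alternate in it exactly
when they occur in the same relative order in every permutation. Hence "`a` precedes `b` in every
permutation" is a strict partial order whose comparability graph is `G`. Conversely, a partial order
is the intersection of its linear extensions (one for every pair `(u, v)` with `v ≰ u`, placing `u`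
before `v`); writing each of these extensions of a transitive orientation of `G` as a permutation
and concatenating them represents `G`.
-/

namespace List

variable {α : Type*}

theorem isChain_ne_flatten_iff {L : List (List α)} {a b : α} (hab : a ≠ b)
    (hL : ∀ q ∈ L, q = [a, b] ∨ q = [b, a]) :
    L.flatten.IsChain (· ≠ ·) ↔ (∀ q ∈ L, q = [a, b]) ∨ ∀ q ∈ L, q = [b, a] := by
  have hnil : [] ∉ L := fun h => by simpa using hL [] h
  have hblocks : ∀ q ∈ L, q.IsChain (· ≠ ·) := by
    intro q hq
    rcases hL q hq with rfl | rfl <;> simp [hab, hab.symm]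
  -- consecutive blocks `[x, y] [x', y']` join alternately iff `y ≠ x'`, i.e. iff they agree
  have hjunction : L.IsChain (fun l₁ l₂ => ∀ x ∈ l₁.getLast?, ∀ y ∈ l₂.head?, x ≠ y) ↔
      L.IsChain (· = ·) :=
    IsChain.iff_of_mem_imp fun q q' hq hq' => by
      rcases hL q hq with rfl | rfl <;> rcases hL q' hq' with rfl | rfl <;> simp [hab, hab.symm]
  rw [isChain_flatten hnil, hjunction, and_iff_right hblocks]
  cases L with
  | nil => simp
  | cons q L =>
    rw [isChain_cons_eq_iff_eq_replicate, eq_replicate_iff]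
    rcases hL q mem_cons_self with rfl | rfl <;> simp [hab, hab.symm]

variable [DecidableEq α]

theorem Nodup.idxOf_lt_idxOf_of_pair_sublist {l : List α} (hl : l.Nodup) {x y : α}
    (h : [x, y] <+ l) : l.idxOf x < l.idxOf y := by
  have hpos : l.Pairwise (fun x y => l.idxOf x < l.idxOf y) :=
    pairwise_iff_getElem.mpr fun i j hi hj hij => by rwa [hl.idxOf_getElem, hl.idxOf_getElem]
  exact pairwise_iff_forall_sublist.mp hpos h

theorem Nodup.eq_pair_iff_idxOf_lt {l q : List α} (hl : l.Nodup) (hq : q <+ l) {x y : α}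
    (hxy : q = [x, y] ∨ q = [y, x]) : q = [x, y] ↔ l.idxOf x < l.idxOf y := by
  refine ⟨fun h => hl.idxOf_lt_idxOf_of_pair_sublist (h ▸ hq), fun hlt => hxy.resolve_right ?_⟩
  rintro rfl
  exact lt_asymm hlt (hl.idxOf_lt_idxOf_of_pair_sublist hq)

theorem Nodup.filter_eq_pair_or_swap {l : List α} (hl : l.Nodup) {a b : α} (ha : a ∈ l)
    (hb : b ∈ l) (hab : a ≠ b) :
    l.filter (fun x => decide (x = a ∨ x = b)) = [a, b] ∨
      l.filter (fun x => decide (x = a ∨ x = b)) = [b, a] :=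
  perm_pair.mp <| (perm_ext_iff_of_nodup (hl.filter _) (by simp [hab])).mpr fun x => by
    simp only [mem_filter, decide_eq_true_eq, mem_cons, not_mem_nil, or_false]
    grind

theorem Pairwise.rel_of_idxOf_lt {R : α → α → Prop} {l : List α} (hl : l.Pairwise R) {a b : α}
    (hb : b ∈ l) (h : l.idxOf a < l.idxOf b) : R a b := by
  have hb' := idxOf_lt_length_of_mem hb
  simpa only [getElem_idxOf] using pairwise_iff_getElem.mp hl _ _ (h.trans hb') hb' h

end List

theorem exists_isLinearOrder_le_of_not_le {α : Type*} [PartialOrder α] {u v : α} (h : ¬ v ≤ u) :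
    ∃ s : α → α → Prop, IsLinearOrder α s ∧ (∀ a b, a ≤ b → s a b) ∧ s u v := by
  let R : α → α → Prop := fun a b => a ≤ b ∨ (a ≤ u ∧ v ≤ b)
  have : IsPartialOrder α R :=
    { refl := fun a => Or.inl le_rfl
      trans := by
        rintro a b c (hab | ⟨hau, hvb⟩) (hbc | ⟨hbu, hvc⟩)
        · exact Or.inl (hab.trans hbc)
        · exact Or.inr ⟨hab.trans hbu, hvc⟩
        · exact Or.inr ⟨hau, hvb.trans hbc⟩
        · exact Or.inr ⟨hau, hvc⟩
      antisymm := by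
        rintro a b (hab | ⟨hau, hvb⟩) (hba | ⟨hbu, hva⟩)
        · exact hab.antisymm hba
        · exact absurd (hva.trans (hab.trans hbu)) h
        · exact absurd (hvb.trans (hba.trans hau)) h
        · exact absurd (hva.trans hau) h }
  obtain ⟨s, hs, hRs⟩ := extend_partialOrder R
  exact ⟨s, hs, fun a b hab => hRs a b (Or.inl hab), hRs u v (Or.inr ⟨le_rfl, le_rfl⟩)⟩

-- Dushnik–Miller; the extension with index `(u, v)` puts `u` before `v` whenever `v ≰ u`.
theorem exists_isLinearOrder_family_le_iff (α : Type*) [PartialOrder α] :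
    ∃ s : α × α → α → α → Prop, (∀ i, IsLinearOrder α (s i)) ∧ ∀ a b, a ≤ b ↔ ∀ i, s i a b := by
  have hext : ∀ i : α × α, ∃ s : α → α → Prop, IsLinearOrder α s ∧ (∀ a b, a ≤ b → s a b) ∧
      (¬ i.2 ≤ i.1 → s i.1 i.2) := by
    rintro ⟨u, v⟩
    by_cases hvu : v ≤ u
    · obtain ⟨s, hs, hle⟩ := extend_partialOrder (α := α) (· ≤ ·)
      exact ⟨s, hs, hle, fun h => absurd hvu h⟩
    · obtain ⟨s, hs, hle, huv⟩ := exists_isLinearOrder_le_of_not_le hvu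
      exact ⟨s, hs, hle, fun _ => huv⟩
  choose s hlin hle hsep using hext
  refine ⟨s, hlin, fun a b => ⟨fun h i => hle i a b h, fun h => ?_⟩⟩
  by_contra hab
  have := hlin (b, a)
  exact hab (antisymm (r := s (b, a)) (h (b, a)) (hsep (b, a) hab)).le

theorem exists_isPermOn_idxOf_lt_iff {V : Type*} [DecidableEq V] [Fintype V]
    (s : V → V → Prop) [IsLinearOrder V s] :
    ∃ p : List V, IsPermOn p ∧ ∀ a b, a ≠ b → (p.idxOf a < p.idxOf b ↔ s a b) := by
  classical
  let p := Finset.univ.sort s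
  have hmem : ∀ v, v ∈ p := fun v => (Finset.mem_sort _).mpr (Finset.mem_univ v)
  have hsorted : p.Pairwise s := Finset.pairwise_sort _ _
  refine ⟨p, ⟨Finset.sort_nodup _ _, hmem⟩, fun a b hab =>
    ⟨hsorted.rel_of_idxOf_lt (hmem b), fun hs => ?_⟩⟩
  have hne : p.idxOf a ≠ p.idxOf b := (List.idxOf_inj (hmem a)).not.mpr hab
  have hba : ¬ p.idxOf b < p.idxOf a := fun hba =>
    hab (antisymm hs (hsorted.rel_of_idxOf_lt (hmem a) hba))
  omega

theorem isComparability_iff_exists_isStrictOrder {V : Type*} (G : SimpleGraph V) :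
    IsComparability G ↔
      ∃ r : V → V → Prop, IsStrictOrder V r ∧ ∀ a b, G.Adj a b ↔ r a b ∨ r b a := by
  constructor
  · rintro ⟨lt, htrans, hadj, horient⟩
    refine ⟨lt, { irrefl := fun a h => G.irrefl (hadj a a h), trans := fun _ _ _ => @htrans _ _ _ },
      fun a b => ⟨fun h => ?_, ?_⟩⟩
    · by_cases hba : lt b a
      · exact Or.inr hba
      · exact Or.inl ((horient a b h).mpr hba)
    · rintro (h | h)
      · exact hadj a b h
      · exact (hadj b a h).symm
  · rintro ⟨r, hr, hG⟩
    refine ⟨r, fun _ _ _ => _root_.trans, fun a b h => (hG a b).mpr (Or.inl h), fun a b h => ?_⟩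
    exact ⟨fun hab hba => irrefl a (_root_.trans hab hba), ((hG a b).mp h).resolve_right⟩

section

variable {V : Type*} [DecidableEq V]

theorem alternates_flatten_iff {ps : List (List V)} (hps : ∀ p ∈ ps, IsPermOn p) {a b : V}
    (hab : a ≠ b) :
    Alternates ps.flatten a b ↔
      (∀ p ∈ ps, p.idxOf a < p.idxOf b) ∨ ∀ p ∈ ps, p.idxOf b < p.idxOf a := by
  have hsplit := fun p hp =>
    (hps p hp).1.filter_eq_pair_or_swap ((hps p hp).2 a) ((hps p hp).2 b) hab
  change List.IsChain _ _ ↔ _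
  rw [List.filter_flatten, List.isChain_ne_flatten_iff hab (List.forall_mem_map.mpr hsplit),
    List.forall_mem_map, List.forall_mem_map]
  exact or_congr
    (forall₂_congr fun p hp => (hps p hp).1.eq_pair_iff_idxOf_lt List.filter_sublist (hsplit p hp))
    (forall₂_congr fun p hp =>
      (hps p hp).1.eq_pair_iff_idxOf_lt List.filter_sublist (hsplit p hp).symm)

theorem PermRepresents.exists_isStrictOrder {G : SimpleGraph V} {k : ℕ}
    (h : PermRepresents G k) :
    ∃ r : V → V → Prop, IsStrictOrder V r ∧ ∀ a b, G.Adj a b ↔ r a b ∨ r b a := by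
  obtain ⟨ps, -, hps, hmem, hadj⟩ := h
  have hirrefl : ∀ a, ¬ ∀ p ∈ ps, p.idxOf a < p.idxOf a := fun a ha => by
    obtain ⟨p, hp, -⟩ := List.mem_flatten.mp (hmem a)
    exact lt_irrefl _ (ha p hp)
  refine ⟨fun a b => ∀ p ∈ ps, p.idxOf a < p.idxOf b,
    { irrefl := hirrefl, trans := fun a b c hab hbc p hp => (hab p hp).trans (hbc p hp) },
    fun a b => ?_⟩
  rcases eq_or_ne a b with rfl | hab
  · exact iff_of_false G.irrefl (by rw [or_self]; exact hirrefl a)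
  · rw [hadj a b hab, alternates_flatten_iff hps hab]

theorem exists_permRepresents_of_isStrictOrder [Fintype V] {G : SimpleGraph V}
    (r : V → V → Prop) [IsStrictOrder V r] (hG : ∀ a b, G.Adj a b ↔ r a b ∨ r b a) :
    ∃ k, PermRepresents G k := by
  let := partialOrderOfSO r
  obtain ⟨s, hlin, hle⟩ := exists_isLinearOrder_family_le_iff V
  choose p hperm hidx using fun i => @exists_isPermOn_idxOf_lt_iff _ _ _ (s i) (hlin i)
  let ps := (Finset.univ : Finset (V × V)).toList.map p
  have hps : ∀ q ∈ ps, IsPermOn q := List.forall_mem_map.mpr fun i _ => hperm i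
  refine ⟨ps.length, ps, rfl, hps,
    fun v => List.mem_flatten.mpr ⟨p (v, v), List.mem_map_of_mem (by simp), (hperm _).2 v⟩,
    fun a b hab => ?_⟩
  have hr : ∀ a b, a ≠ b → (r a b ↔ ∀ i, s i a b) := fun a b hab =>
    (or_iff_right hab).symm.trans (hle a b)
  simp only [hG, alternates_flatten_iff hps hab, ps, List.forall_mem_map, Finset.mem_toList,
    Finset.mem_univ, true_implies, hidx _ _ _ hab, hidx _ _ _ hab.symm, hr a b hab, hr b a hab.symm]

end

/-- a graph is permutationally representable iff it is a comparability graph. -/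
theorem stmt3 {V : Type*} [DecidableEq V] [Fintype V] (G : SimpleGraph V) :
    (∃ k : ℕ, PermRepresents G k) ↔ IsComparability G := by
  rw [isComparability_iff_exists_isStrictOrder]
  constructor
  · rintro ⟨k, hk⟩
    exact hk.exists_isStrictOrder
  · rintro ⟨r, _, hG⟩
    exact exists_permRepresents_of_isStrictOrder r hG
end

section
/- Let G = (V ∪ {a}, E) be a word-representable graph with representation number k (smallest k such that G has a k-uniform representing word) and M a comparability graph with permutation-representation number k' (smallest number of permutations whose concatenation represents M). Then the representation number of G_a[M] equals max{k, k'}. -/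
open List Function

-- `count` has to use the `BEq` instance coming from `DecidableEq`, as `IsKUniform` does.
attribute [local instance 2000] instBEqOfDecidableEq

section TwoLetterWords

variable {α : Type*} [DecidableEq α] {x y : α} {l : List α}

theorem count_add_ite_head?_eq_of_isChain_ne (hxy : x ≠ y) (hl : ∀ c ∈ l, c = x ∨ c = y)
    (hc : IsChain (· ≠ ·) l) :
    l.count x + (if l.head? = some y then 1 else 0) =
      l.count y + (if l.getLast? = some x then 1 else 0) := by
  induction l with
  | nil => simp
  | cons c l ih =>
    have ih := ih (fun d hd => hl d (mem_cons_of_mem _ hd)) hc.tail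
    rcases l with _ | ⟨d, l⟩
    · rcases hl c mem_cons_self with rfl | rfl <;> simp [hxy, hxy.symm]
    · have hcd : c ≠ d := (isChain_cons_cons.1 hc).1
      have hlast : (c :: d :: l).getLast? = (d :: l).getLast? := by simp [getLast?_cons]
      rw [hlast]
      rcases hl c mem_cons_self with rfl | rfl <;>
        rcases hl d (by simp) with rfl | rfl <;> simp_all [count_cons]
      omega

theorem count_le_count_add_one_of_isChain_ne (hxy : x ≠ y) (hl : ∀ c ∈ l, c = x ∨ c = y)
    (hc : IsChain (· ≠ ·) l) : l.count x ≤ l.count y + 1 := by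
  have := count_add_ite_head?_eq_of_isChain_ne hxy hl hc
  split_ifs at this <;> omega

theorem head?_ne_getLast?_of_isChain_ne (hxy : x ≠ y) (hl : ∀ c ∈ l, c = x ∨ c = y)
    (hc : IsChain (· ≠ ·) l) (hcount : l.count x = l.count y) :
    ∀ a ∈ l.head?, ∀ b ∈ l.getLast?, a ≠ b := by
  rintro a ha b hb rfl
  have := count_add_ite_head?_eq_of_isChain_ne hxy hl hc
  rw [Option.mem_def] at ha hb
  rcases hl a (mem_of_mem_head? ha) with rfl | rfl <;> simp_all

end TwoLetterWords

section Alternation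

variable {α : Type*} [DecidableEq α] {x y : α}

theorem alternates_iff_isChain (l : List α) (x y : α) :
    Alternates l x y ↔ IsChain (· ≠ ·) (l.filter (fun z => decide (z = x ∨ z = y))) :=
  Iff.rfl

theorem mem_pair_of_mem_filter {l : List α} :
    ∀ c ∈ l.filter (fun z => decide (z = x ∨ z = y)), c = x ∨ c = y := by
  intro c hc
  simpa using (mem_filter.1 hc).2

theorem count_filter_pair_left (l : List α) :
    (l.filter (fun z => decide (z = x ∨ z = y))).count x = l.count x :=
  count_filter (by simp)

theorem count_filter_pair_right (l : List α) :
    (l.filter (fun z => decide (z = x ∨ z = y))).count y = l.count y :=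
  count_filter (by simp)

theorem Alternates.count_le_count_add_one {l : List α} (hxy : x ≠ y) (h : Alternates l x y) :
    l.count x ≤ l.count y + 1 := by
  simpa only [count_filter_pair_left, count_filter_pair_right] using
    count_le_count_add_one_of_isChain_ne hxy mem_pair_of_mem_filter h

theorem Alternates.left_of_append {l₁ l₂ : List α} (h : Alternates (l₁ ++ l₂) x y) :
    Alternates l₁ x y := by
  simp only [alternates_iff_isChain] at h ⊢
  rw [filter_append] at h
  exact h.left_of_append

theorem Alternates.right_of_append {l₁ l₂ : List α} (h : Alternates (l₁ ++ l₂) x y) :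
    Alternates l₂ x y := by
  simp only [alternates_iff_isChain] at h ⊢
  rw [filter_append] at h
  exact h.right_of_append

theorem Alternates.append_comm {l₁ l₂ : List α} (hxy : x ≠ y)
    (hcount : (l₁ ++ l₂).count x = (l₁ ++ l₂).count y) (h : Alternates (l₁ ++ l₂) x y) :
    Alternates (l₂ ++ l₁) x y := by
  simp only [alternates_iff_isChain] at h ⊢
  rw [filter_append] at h ⊢
  obtain ⟨h₁, h₂, -⟩ := isChain_append.1 h
  refine h₂.append h₁ fun b hb a ha => ?_
  have hF : ((l₁ ++ l₂).filter (fun z => decide (z = x ∨ z = y))).count x =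
      ((l₁ ++ l₂).filter (fun z => decide (z = x ∨ z = y))).count y := by
    rwa [count_filter_pair_left, count_filter_pair_right]
  rw [filter_append] at hF
  refine (head?_ne_getLast?_of_isChain_ne hxy ?_ h hF a ?_ b ?_).symm
  · intro c hc
    rcases mem_append.1 hc with hc | hc <;> exact mem_pair_of_mem_filter c hc
  · rw [head?_append, Option.mem_def.1 ha]; rfl
  · rw [getLast?_append, Option.mem_def.1 hb]; rfl

theorem getLast?_dedup (l : List α) : l.dedup.getLast? = l.getLast? := by
  induction l with
  | nil => rfl
  | cons a l ih =>
    by_cases ha : a ∈ l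
    · have hl : l ≠ [] := ne_nil_of_mem ha
      rw [dedup_cons_of_mem ha, ih, getLast?_cons, getLast?_eq_some_getLast hl]
      rfl
    · rw [dedup_cons_of_notMem ha, getLast?_cons, getLast?_cons, ih]

theorem filter_dedup (p : α → Bool) (l : List α) : l.dedup.filter p = (l.filter p).dedup := by
  induction l with
  | nil => rfl
  | cons a l ih =>
    by_cases hp : p a <;> by_cases ha : a ∈ l
    · rw [dedup_cons_of_mem ha, filter_cons_of_pos hp,
        dedup_cons_of_mem (mem_filter.2 ⟨ha, hp⟩), ih]
    · rw [dedup_cons_of_notMem ha, filter_cons_of_pos hp, filter_cons_of_pos hp,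
        dedup_cons_of_notMem fun h => ha (mem_filter.1 h).1, ih]
    · rw [dedup_cons_of_mem ha, filter_cons_of_neg hp, ih]
    · rw [dedup_cons_of_notMem ha, filter_cons_of_neg hp, filter_cons_of_neg hp, ih]

/-- `l.dedup` lists the letters in the order of their last occurrences, so appending it
continues every alternation. -/
theorem alternates_append_dedup_iff {l : List α} (hxy : x ≠ y) (hx : x ∈ l) (hy : y ∈ l) :
    Alternates (l ++ l.dedup) x y ↔ Alternates l x y := by
  refine ⟨Alternates.left_of_append, fun h => ?_⟩
  simp only [alternates_iff_isChain] at h ⊢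
  set F := l.filter (fun z => decide (z = x ∨ z = y))
  rw [filter_append, filter_dedup]
  have hnd : F.dedup.Nodup := nodup_dedup F
  refine h.append hnd.isChain fun b hb a ha => ?_
  obtain ⟨L, hL⟩ : ∃ L, F.dedup = a :: L := ⟨_, (cons_head?_tail ha).symm⟩
  have hxF : x ∈ F.dedup := mem_dedup.2 (mem_filter.2 ⟨hx, by simp⟩)
  have hyF : y ∈ F.dedup := mem_dedup.2 (mem_filter.2 ⟨hy, by simp⟩)
  rw [hL] at hnd hxF hyF
  have hb' : b ∈ (a :: L).getLast? := by rw [← hL, getLast?_dedup]; exact hb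
  rintro rfl
  rcases L with _ | ⟨c, L⟩
  · simp_all
  · exact (nodup_cons.1 hnd).1 (mem_of_getLast? (by simpa [getLast?_cons] using hb'))

end Alternation

section Projection

variable {α β : Type*} [DecidableEq α] [DecidableEq β] {σ : β → α} {g : α → Option β}

theorem count_filterMap_of_isPartialInv (hg : IsPartialInv σ g) (l : List α) (b : β) :
    (l.filterMap g).count b = l.count (σ b) := by
  rw [count_filterMap, count]
  congr 1
  funext a
  simp [hg b a, eq_comm]

theorem filter_filterMap_of_isPartialInv (hg : IsPartialInv σ g) (l : List α) (b b' : β) :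
    (l.filterMap g).filter (fun c => decide (c = b ∨ c = b')) =
      (l.filter (fun a => decide (a = σ b ∨ a = σ b'))).filterMap g := by
  rw [filter_filterMap, filterMap_filter]
  congr 1
  funext a
  by_cases ha : a = σ b ∨ a = σ b'
  · rcases ha with rfl | rfl <;> simp [hg.eq]
  · rw [if_neg (by simpa using ha)]
    cases hga : g a with
    | none => rfl
    | some c =>
      have hc := (hg c a).1 hga
      subst hc
      simp only [Option.filter_some, decide_eq_true_eq, ite_eq_right_iff, reduceCtorEq, imp_false]
      rintro (rfl | rfl) <;> simp at ha

omit [DecidableEq α] [DecidableEq β] in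
theorem map_filterMap_of_isPartialInv (hg : IsPartialInv σ g) {L : List α}
    (hL : ∀ a ∈ L, ∃ b, σ b = a) : (L.filterMap g).map σ = L := by
  induction L with
  | nil => rfl
  | cons a L ih =>
    obtain ⟨b, rfl⟩ := hL _ mem_cons_self
    rw [filterMap_cons, hg.eq, map_cons, ih fun a ha => hL a (mem_cons_of_mem _ ha)]

theorem alternates_filterMap_iff (hg : IsPartialInv σ g) (l : List α) (b b' : β) :
    Alternates (l.filterMap g) b b' ↔ Alternates l (σ b) (σ b') := by
  simp only [alternates_iff_isChain]
  rw [filter_filterMap_of_isPartialInv hg]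
  set L := l.filter (fun a => decide (a = σ b ∨ a = σ b'))
  have hL : (L.filterMap g).map σ = L := by
    refine map_filterMap_of_isPartialInv hg fun a ha => ?_
    rcases mem_pair_of_mem_filter a ha with rfl | rfl <;> exact ⟨_, rfl⟩
  conv_rhs => rw [← hL]
  rw [isChain_map]
  simp only [hg.injective.ne_iff]

theorem Represents.comap (hg : IsPartialInv σ g) {l : List α} {H : SimpleGraph α}
    (h : Represents l H) : Represents (l.filterMap g) (H.comap σ) :=
  ⟨fun b => mem_filterMap.2 ⟨σ b, h.1 _, hg.eq b⟩, fun _ _ hbb' =>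
    (h.2 _ _ (hg.injective.ne hbb')).trans (alternates_filterMap_iff hg l _ _).symm⟩

theorem IsKUniform.filterMap (hg : IsPartialInv σ g) {l : List α} {k : ℕ} (h : IsKUniform l k) :
    IsKUniform (l.filterMap g) k :=
  fun b => (count_filterMap_of_isPartialInv hg l b).trans (h _)

theorem adj_iff_alternates_of_represents_comap (hg : IsPartialInv σ g) {l : List α}
    {H : SimpleGraph α} (h : Represents (l.filterMap g) (H.comap σ)) {b b' : β}
    (hbb' : b ≠ b') :
    H.Adj (σ b) (σ b') ↔ Alternates l (σ b) (σ b') :=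
  (h.2 b b' hbb').trans (alternates_filterMap_iff hg l _ _)

end Projection

section Representation

variable {α : Type*} [DecidableEq α] {H : SimpleGraph α}

theorem IsKUniform.append_comm {l₁ l₂ : List α} {k : ℕ} (h : IsKUniform (l₁ ++ l₂) k) :
    IsKUniform (l₂ ++ l₁) k := fun v => by
  rw [count_append, Nat.add_comm, ← count_append]; exact h v

theorem Represents.append_comm {l₁ l₂ : List α} {k : ℕ} (hu : IsKUniform (l₁ ++ l₂) k)
    (h : Represents (l₁ ++ l₂) H) : Represents (l₂ ++ l₁) H := by
  refine ⟨fun v => mem_append.2 (mem_append.1 (h.1 v)).symm,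
    fun x y hxy => (h.2 x y hxy).trans ?_⟩
  refine ⟨Alternates.append_comm hxy (by rw [hu, hu]), Alternates.append_comm hxy ?_⟩
  rw [hu.append_comm, hu.append_comm]

theorem Represents.append_dedup {l : List α} (h : Represents l H) :
    Represents (l ++ l.dedup) H :=
  ⟨fun v => mem_append_left _ (h.1 v), fun x y hxy =>
    (h.2 x y hxy).trans (alternates_append_dedup_iff hxy (h.1 x) (h.1 y)).symm⟩

theorem IsKUniform.append_dedup {l : List α} {k : ℕ} (hu : IsKUniform l k)
    (hl : ∀ v, v ∈ l) :
    IsKUniform (l ++ l.dedup) (k + 1) := fun v => by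
  rw [count_append, count_dedup, if_pos (hl v), hu v]

theorem exists_isKUniform_represents_of_le {l : List α} {k m : ℕ} (hu : IsKUniform l k)
    (h : Represents l H) (hkm : k ≤ m) : ∃ w, IsKUniform w m ∧ Represents w H := by
  induction m, hkm using Nat.le_induction with
  | base => exact ⟨l, hu, h⟩
  | succ m _ ih =>
    obtain ⟨w, hwu, hw⟩ := ih
    exact ⟨w ++ w.dedup, hwu.append_dedup hw.1, hw.append_dedup⟩

/-- The last permutation of a concatenation of permutations is its `dedup`, so repeating it is
a special case of `Represents.append_dedup`. -/
theorem PermRepresents.succ [Nonempty α] {n : ℕ} (h : PermRepresents H n) :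
    PermRepresents H (n + 1) := by
  obtain ⟨ps, hlen, hps, hr⟩ := h
  obtain ⟨v⟩ := ‹Nonempty α›
  obtain ⟨qs, p, rfl⟩ : ∃ qs p, ps = qs ++ [p] := by
    rcases eq_nil_or_concat ps with rfl | ⟨qs, p, rfl⟩
    · simpa using hr.1 v
    · exact ⟨qs, p, concat_eq_append ..⟩
  have hp : IsPermOn p := hps p (by simp)
  have hdedup : (qs.flatten ++ p).dedup = p := by
    rw [Subset.dedup_append_right fun x _ => hp.2 x, hp.1.dedup]
  refine ⟨qs ++ [p] ++ [p], by rw [← hlen, length_append, length_singleton], ?_, ?_⟩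
  · intro q hq
    rcases mem_append.1 hq with hq | hq
    · exact hps q hq
    · rw [mem_singleton.1 hq]; exact hp
  · simpa [hdedup] using hr.append_dedup

theorem PermRepresents.mono [Nonempty α] {n m : ℕ} (h : PermRepresents H n) (hnm : n ≤ m) :
    PermRepresents H m := by
  induction m, hnm using Nat.le_induction with
  | base => exact h
  | succ m _ ih => exact ih.succ

end Representation

section UniversalVertex

variable {β : Type*} [DecidableEq β]

omit [DecidableEq β] in
theorem isPartialInv_some_id : IsPartialInv (some : β → Option β) id := fun _ _ => eq_comm

theorem isPermOn_reduceOption {s : List (Option β)} (h : ∀ x, s.count (some x) = 1) :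
    IsPermOn s.reduceOption := by
  have hc x : s.reduceOption.count x = 1 :=
    (count_filterMap_of_isPartialInv isPartialInv_some_id s x).trans (h x)
  exact ⟨nodup_iff_count_le_one.2 fun x => (hc x).le,
    fun x => count_pos_iff.1 (by rw [hc x]; exact Nat.one_pos)⟩

theorem count_some_eq_one_of_alternates {p r : List (Option β)} {x : β} (hp : none ∉ p)
    (halt : Alternates (p ++ none :: r) (some x) none)
    (hcount : (p ++ none :: r).count (some x) = (p ++ none :: r).count none + 1) :
    p.count (some x) = 1 := by
  have hp' := halt.left_of_append.count_le_count_add_one (Option.some_ne_none x)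
  have hr := (halt.right_of_append.right_of_append (l₁ := [none])).count_le_count_add_one
    (Option.some_ne_none x)
  rw [count_eq_zero.2 hp] at hp'
  simp only [count_append, count_cons_self, count_cons_of_ne (Option.some_ne_none x).symm]
    at hcount
  omega

/-- The permutations are the blocks between consecutive letters `none`. -/
theorem exists_isPermOn_flatten_eq_reduceOption {s : List (Option β)}
    (hcount : ∀ x, s.count (some x) = s.count none + 1)
    (halt : ∀ x, Alternates s (some x) none) :
    ∃ ps : List (List β), ps.length = s.count none + 1 ∧ (∀ p ∈ ps, IsPermOn p) ∧
      ps.flatten = s.reduceOption := by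
  induction hn : s.count none generalizing s with
  | zero =>
    refine ⟨[s.reduceOption], rfl, ?_, flatten_singleton⟩
    simpa using isPermOn_reduceOption fun x => (hcount x).trans (by rw [hn])
  | succ n ih =>
    obtain ⟨p, r, rfl, hp⟩ := eq_append_cons_of_mem (count_pos_iff.1 (by omega) : none ∈ s)
    have hp1 x : p.count (some x) = 1 := count_some_eq_one_of_alternates hp (halt x) (hcount x)
    have hr : r.count none = n := by
      simp only [count_append, count_cons_self, count_eq_zero.2 hp] at hn
      omega
    obtain ⟨ps, hlen, hps, hflat⟩ := ih (s := r)
      (fun x => by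
        have := hcount x
        have := hp1 x
        simp only [count_append, count_cons_self,
          count_cons_of_ne (Option.some_ne_none x).symm] at *
        omega)
      (fun x => (halt x).right_of_append.right_of_append (l₁ := [none])) hr
    refine ⟨p.reduceOption :: ps, by rw [length_cons, hlen], ?_, ?_⟩
    · exact forall_mem_cons.2 ⟨isPermOn_reduceOption hp1, hps⟩
    · rw [flatten_cons, hflat, reduceOption_append, reduceOption_cons_of_none]

theorem permRepresents_comap_some_of_adj_none {H : SimpleGraph (Option β)} {t : List (Option β)}
    {n : ℕ} (hu : IsKUniform t n) (hr : Represents t H) (hadj : ∀ x, H.Adj (some x) none) :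
    PermRepresents (H.comap some) n := by
  obtain ⟨t₁, t₂, rfl⟩ := append_of_mem (hr.1 none)
  have hu' : IsKUniform (none :: (t₂ ++ t₁)) n := hu.append_comm
  have hr' : Represents (none :: (t₂ ++ t₁)) H := hr.append_comm hu
  have hnone : (t₂ ++ t₁).count none + 1 = n := by simpa using hu' none
  obtain ⟨ps, hlen, hps, hflat⟩ := exists_isPermOn_flatten_eq_reduceOption (s := t₂ ++ t₁)
    (fun x => by rw [hnone]; simpa using hu' (some x))
    (fun x => ((hr'.2 _ _ (Option.some_ne_none x)).1 (hadj x)).right_of_append (l₁ := [none]))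
  refine ⟨ps, hlen.trans hnone, hps, ?_⟩
  rw [hflat]
  exact hr'.comap isPartialInv_some_id

end UniversalVertex

section Substitution

variable {W V' : Type*} [DecidableEq W] [DecidableEq V'] {a : W}

def substVertex (a : W) (x : V') (c : W) : {c // c ≠ a} ⊕ V' :=
  if h : c = a then .inr x else .inl ⟨c, h⟩

def substVertexInv (a : W) (x : V') : {c // c ≠ a} ⊕ V' → Option W :=
  Sum.elim (fun u => some u.1) (fun y => if y = x then some a else none)

omit [DecidableEq V'] in
theorem substVertex_val (x : V') (u : {c // c ≠ a}) : substVertex a x u.1 = .inl u :=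
  dif_neg u.2

omit [DecidableEq V'] in
theorem substVertex_self (x : V') : substVertex a x a = .inr x :=
  dif_pos rfl

theorem isPartialInv_substVertex (a : W) (x : V') :
    IsPartialInv (substVertex a x) (substVertexInv a x) := by
  rintro c (u | y)
  · by_cases hc : c = a
    · subst hc; simpa [substVertexInv, substVertex_self] using u.2
    · simp [substVertexInv, substVertex, hc, Subtype.ext_iff, eq_comm]
  · by_cases hc : c = a
    · subst hc; simp [substVertexInv, substVertex_self, eq_comm]
    · simp [substVertexInv, substVertex, hc, Ne.symm hc]

omit [DecidableEq V'] in
theorem comap_substVertex_substGraph (G : SimpleGraph W) (M : SimpleGraph V') (x : V') :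
    (substGraph G a M).comap (substVertex a x) = G := by
  ext c d
  by_cases hc : c = a <;> by_cases hd : d = a <;> simp [substVertex, hc, hd, substGraph]

/-- The `i`-th occurrence of `a` in `w` is replaced by the `i`-th word of `ps`. -/
def substWord (a : W) : List W → List (List V') → List ({c // c ≠ a} ⊕ V')
  | [], _ => []
  | c :: w, ps =>
    if h : c = a then ps.headI.map .inr ++ substWord a w ps.tail
    else .inl ⟨c, h⟩ :: substWord a w ps

omit [DecidableEq V'] in
theorem filterMap_getRight?_substWord {w : List W} {ps : List (List V')}
    (h : w.count a = ps.length) : (substWord a w ps).filterMap Sum.getRight? = ps.flatten := by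
  induction w generalizing ps with
  | nil => simp [substWord, length_eq_zero_iff.1 h.symm]
  | cons c w ih =>
    by_cases hc : c = a
    · subst hc
      obtain ⟨p, ps, rfl⟩ := exists_cons_of_length_pos (h ▸ count_pos_iff.2 mem_cons_self)
      simp only [substWord, dite_true, headI_cons, tail_cons, filterMap_append, filterMap_map,
        flatten_cons, ih (by simpa using h)]
      simp [Function.comp_def]
    · simp only [substWord, hc, dite_false, filterMap_cons, Sum.getRight?_inl]
      exact ih (by rwa [count_cons_of_ne hc] at h)

theorem filterMap_substVertexInv_substWord (x : V') {w : List W} {ps : List (List V')}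
    (h : w.count a = ps.length) (hps : ∀ p ∈ ps, p.count x = 1) :
    (substWord a w ps).filterMap (substVertexInv a x) = w := by
  induction w generalizing ps with
  | nil => rfl
  | cons c w ih =>
    by_cases hc : c = a
    · subst c
      obtain ⟨p, ps, rfl⟩ := exists_cons_of_length_pos (h ▸ count_pos_iff.2 mem_cons_self)
      have hrep (q : List V') :
          q.filterMap (fun y => if y = x then some a else none) = replicate (q.count x) a := by
        induction q with
        | nil => rfl
        | cons y q ih => by_cases hy : y = x <;> simp [hy, ih, replicate_succ]
      simp only [substWord, dite_true, headI_cons, tail_cons, filterMap_append, filterMap_map,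
        ih (by simpa using h) fun q hq => hps q (mem_cons_of_mem _ hq)]
      simp [Function.comp_def, substVertexInv, hrep, hps p mem_cons_self]
    · simp only [substWord, hc, dite_false, filterMap_cons]
      rw [ih (by rwa [count_cons_of_ne hc] at h) hps]
      rfl

theorem count_substWord_substVertex {w : List W} {ps : List (List V')}
    (h : w.count a = ps.length) (hps : ∀ p ∈ ps, IsPermOn p) (x : V') (c : W) :
    (substWord a w ps).count (substVertex a x c) = w.count c := by
  rw [← count_filterMap_of_isPartialInv (isPartialInv_substVertex a x),
    filterMap_substVertexInv_substWord x h fun p hp =>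
      count_eq_one_of_mem (hps p hp).1 ((hps p hp).2 x)]

omit [DecidableEq V'] in
theorem exists_substVertex_eq [Nonempty V'] (p : {c // c ≠ a} ⊕ V') :
    ∃ x c, substVertex a x c = p := by
  rcases p with u | x
  · obtain ⟨x⟩ := ‹Nonempty V'›
    exact ⟨x, u.1, substVertex_val x u⟩
  · exact ⟨x, a, substVertex_self x⟩

theorem isKUniform_substWord [Nonempty V'] {w : List W} {ps : List (List V')} {k : ℕ}
    (hu : IsKUniform w k) (h : w.count a = ps.length) (hps : ∀ p ∈ ps, IsPermOn p) :
    IsKUniform (substWord a w ps) k := fun p => by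
  obtain ⟨x, c, rfl⟩ := exists_substVertex_eq p
  rw [count_substWord_substVertex h hps, hu c]

theorem represents_substWord [Nonempty V'] {G : SimpleGraph W} {M : SimpleGraph V'} {w : List W}
    {ps : List (List V')} (hw : Represents w G) (hM : Represents ps.flatten M)
    (h : w.count a = ps.length) (hps : ∀ p ∈ ps, IsPermOn p) :
    Represents (substWord a w ps) (substGraph G a M) := by
  have hG x : Represents ((substWord a w ps).filterMap (substVertexInv a x))
      ((substGraph G a M).comap (substVertex a x)) := by
    rwa [comap_substVertex_substGraph, filterMap_substVertexInv_substWord x h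
      fun p hp => count_eq_one_of_mem (hps p hp).1 ((hps p hp).2 x)]
  have hM' : Represents ((substWord a w ps).filterMap Sum.getRight?)
      ((substGraph G a M).comap Sum.inr) := by
    rwa [filterMap_getRight?_substWord h]
  refine ⟨fun p => ?_, ?_⟩
  · obtain ⟨x, c, rfl⟩ := exists_substVertex_eq p
    rw [← count_pos_iff, count_substWord_substVertex h hps]
    exact count_pos_iff.2 (hw.1 c)
  rintro (u | x) (v | y) hpq
  · obtain ⟨x⟩ := ‹Nonempty V'›
    rw [← substVertex_val x u, ← substVertex_val x v] at hpq ⊢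
    exact adj_iff_alternates_of_represents_comap (isPartialInv_substVertex a x) (hG x)
      (ne_of_apply_ne _ hpq)
  · rw [← substVertex_val y u, ← substVertex_self y] at hpq ⊢
    exact adj_iff_alternates_of_represents_comap (isPartialInv_substVertex a y) (hG y)
      (ne_of_apply_ne _ hpq)
  · rw [← substVertex_val x v, ← substVertex_self x] at hpq ⊢
    exact adj_iff_alternates_of_represents_comap (isPartialInv_substVertex a x) (hG x)
      (ne_of_apply_ne _ hpq)
  · exact adj_iff_alternates_of_represents_comap
      (fun _ _ => Sum.getRight?_eq_some_iff.trans eq_comm) hM' (ne_of_apply_ne _ hpq)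

end Substitution

section SubstGraph

variable {W V' : Type*} [DecidableEq W] [DecidableEq V'] {G : SimpleGraph W} {a : W}
  {M : SimpleGraph V'}

theorem exists_isKUniform_represents_substGraph [Nonempty V'] {w : List W} {k k' m : ℕ}
    (hu : IsKUniform w k) (hr : Represents w G) (hM : PermRepresents M k') (hkm : k ≤ m)
    (hk'm : k' ≤ m) : ∃ w', IsKUniform w' m ∧ Represents w' (substGraph G a M) := by
  obtain ⟨w, hu, hr⟩ := exists_isKUniform_represents_of_le hu hr hkm
  obtain ⟨ps, hlen, hps, hM⟩ := hM.mono hk'm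
  have h : w.count a = ps.length := (hu a).trans hlen.symm
  exact ⟨substWord a w ps, isKUniform_substWord hu h hps, represents_substWord hr hM h hps⟩

theorem represents_filterMap_substVertexInv {w : List ({c // c ≠ a} ⊕ V')}
    (hr : Represents w (substGraph G a M)) (x : V') :
    Represents (w.filterMap (substVertexInv a x)) G := by
  simpa only [comap_substVertex_substGraph] using hr.comap (isPartialInv_substVertex a x)

theorem permRepresents_of_represents_substGraph {b : W} (hab : G.Adj a b)
    {w : List ({c // c ≠ a} ⊕ V')} {n : ℕ} (hu : IsKUniform w n)
    (hr : Represents w (substGraph G a M)) : PermRepresents M n := by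
  let σ : Option V' → {c // c ≠ a} ⊕ V' := fun o => o.elim (.inl ⟨b, hab.ne.symm⟩) .inr
  have hσ : Injective σ := by
    rintro (_ | x) (_ | y) h <;> simp_all [σ]
  exact permRepresents_comap_some_of_adj_none (hu.filterMap hσ.isPartialInv)
    (hr.comap hσ.isPartialInv) fun _ => hab

end SubstGraph

theorem stmt8_general {W V' : Type*} [DecidableEq W] [DecidableEq V']
    [Nonempty V'] (G : SimpleGraph W) (a : W) (M : SimpleGraph V')
    (hc : G.Connected) (hV : ∃ x : W, x ≠ a)
    (k k' : ℕ)
    (hk : RepNumIs G k) (hk' : PrnIs M k') :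
    RepNumIs (substGraph G a M) (max k k') := by
  obtain ⟨⟨w, hu, hr⟩, hk_min⟩ := hk
  obtain ⟨hM, hk'_min⟩ := hk'
  refine ⟨exists_isKUniform_represents_substGraph hu hr hM (le_max_left k k')
    (le_max_right k k'), ?_⟩
  rintro n ⟨w', hu', hr'⟩
  obtain ⟨x, hx⟩ := hV
  have : Nontrivial W := ⟨⟨x, a, hx⟩⟩
  obtain ⟨b, hab⟩ := hc.preconnected.exists_adj_of_nontrivial a
  obtain ⟨v⟩ := ‹Nonempty V'›
  exact max_le (hk_min ⟨_, hu'.filterMap (isPartialInv_substVertex a v),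
      represents_filterMap_substVertexInv hr' v⟩)
    (hk'_min (permRepresents_of_represents_substGraph hab hu' hr'))

/-- if `G` is connected word-representable with representation number `k` and
`M` is a comparability graph with permutation-representation number `k'`, then
`R(G_a[M]) = max {k, k'}`. -/
theorem stmt8 {W V' : Type*} [DecidableEq W] [DecidableEq V'] [Fintype W] [Fintype V']
    [Nonempty V'] (G : SimpleGraph W) (a : W) (M : SimpleGraph V')
    (hc : G.Connected) (hV : ∃ x : W, x ≠ a)
    (hM : IsComparability M) (k k' : ℕ)
    (hk : RepNumIs G k) (hk' : PrnIs M k') :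
    RepNumIs (substGraph G a M) (max k k') :=
  stmt8_general G a M hc hV k k' hk hk'
end
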